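/- Let P1 and P2 be n×n skew-symmetric matrix pencils, and let Q1 and Q2 be the (n+1)×(n+1) skew-symmetric matrix pencils congruent to P1 ⊕ M_0 and P2 ⊕ M_0, respectively, where M_0 is the 1×1 zero pencil. Then orbᶜ(P1) covers orbᶜ(P2) if and only if orbᶜ(Q1) covers orbᶜ(Q2). -/

import Mathlib

/-!
Basic framework: a complex `m × n` matrix pencil `A - λ B` is formalized as the
pair `(A, B)` of matrices.  We define strict equivalence, congruence,
skew-symmetry, orbits, direct sums, and the cover relations for the orbit
closure hierarchies (in the Euclidean topology).
-/

open Matrix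

noncomputable section

/-- An `m × n` complex matrix pencil `A - λ B`, formalized as the pair `(A, B)`. -/
abbrev Pencil (m n : ℕ) : Type :=
  Matrix (Fin m) (Fin n) ℂ × Matrix (Fin m) (Fin n) ℂ

namespace Pencil

/-- Strict equivalence of matrix pencils: `Q⁻¹ * A * R = C` and `Q⁻¹ * B * R = D`
for some invertible `Q`, `R`. -/
def StrictEquiv {m n : ℕ} (P Q : Pencil m n) : Prop :=
  ∃ (S : Matrix (Fin m) (Fin m) ℂ) (R : Matrix (Fin n) (Fin n) ℂ),
    IsUnit S ∧ IsUnit R ∧ S⁻¹ * P.1 * R = Q.1 ∧ S⁻¹ * P.2 * R = Q.2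

/-- The strict-equivalence orbit of a pencil. -/
def orbE {m n : ℕ} (P : Pencil m n) : Set (Pencil m n) :=
  {Q | StrictEquiv P Q}

/-- A pencil `A - λ B` is skew-symmetric if `Aᵀ = -A` and `Bᵀ = -B`. -/
def IsSkew {n : ℕ} (P : Pencil n n) : Prop :=
  P.1ᵀ = -P.1 ∧ P.2ᵀ = -P.2

/-- Congruence of (square) matrix pencils: `Sᵀ * A * S = C` and `Sᵀ * B * S = D`
for some invertible `S`. -/
def Congruent {n : ℕ} (P Q : Pencil n n) : Prop :=
  ∃ S : Matrix (Fin n) (Fin n) ℂ,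
    IsUnit S ∧ Sᵀ * P.1 * S = Q.1 ∧ Sᵀ * P.2 * S = Q.2

/-- The congruence orbit of a pencil. -/
def orbC {n : ℕ} (P : Pencil n n) : Set (Pencil n n) :=
  {Q | Congruent P Q}

/-- Direct (block-diagonal) sum of two pencils. -/
def dsum {m n p q : ℕ} (P : Pencil m n) (Q : Pencil p q) : Pencil (m + p) (n + q) :=
  ((fromBlocks P.1 0 0 Q.1).submatrix finSumFinEquiv.symm finSumFinEquiv.symm,
   (fromBlocks P.2 0 0 Q.2).submatrix finSumFinEquiv.symm finSumFinEquiv.symm)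

/-- Transport a pencil along equalities of its dimensions. -/
def cast {m n m' n' : ℕ} (hm : m = m') (hn : n = n') (P : Pencil m n) : Pencil m' n' :=
  (P.1.submatrix (finCongr hm.symm) (finCongr hn.symm),
   P.2.submatrix (finCongr hm.symm) (finCongr hn.symm))

/-- `orbE P1` covers `orbE P2` in the closure hierarchy of strict-equivalence
orbits: `P1` is not strictly equivalent to `P2`, `orbE P2 ⊆ closure (orbE P1)`,
and there is no intermediate orbit strictly between them. -/
def CoversE {m n : ℕ} (P1 P2 : Pencil m n) : Prop :=
  ¬ StrictEquiv P1 P2 ∧ orbE P2 ⊆ closure (orbE P1) ∧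
    ¬ ∃ P : Pencil m n, ¬ StrictEquiv P P1 ∧ ¬ StrictEquiv P P2 ∧
        orbE P ⊆ closure (orbE P1) ∧ orbE P2 ⊆ closure (orbE P)

/-- `orbC P1` covers `orbC P2` in the closure hierarchy of congruence orbits of
skew-symmetric pencils: `P1` is not congruent to `P2`,
`orbC P2 ⊆ closure (orbC P1)`, and there is no congruence orbit of a
skew-symmetric pencil strictly between them. -/
def CoversC {n : ℕ} (P1 P2 : Pencil n n) : Prop :=
  ¬ Congruent P1 P2 ∧ orbC P2 ⊆ closure (orbC P1) ∧
    ¬ ∃ P : Pencil n n, IsSkew P ∧ ¬ Congruent P P1 ∧ ¬ Congruent P P2 ∧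
        orbC P ⊆ closure (orbC P1) ∧ orbC P2 ⊆ closure (orbC P)

end Pencil

/-! Canonical building blocks. -/

/-- The `k × k` Jordan block `J_k(μ)`. -/
def Jmat (k : ℕ) (μ : ℂ) : Matrix (Fin k) (Fin k) ℂ :=
  Matrix.of fun i j => if (j : ℕ) = (i : ℕ) then μ else if (j : ℕ) = (i : ℕ) + 1 then 1 else 0

/-- The `k × (k+1)` matrix `F_k` with ones on the superdiagonal. -/
def Fmat (k : ℕ) : Matrix (Fin k) (Fin (k + 1)) ℂ :=
  Matrix.of fun i j => if (j : ℕ) = (i : ℕ) + 1 then 1 else 0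

/-- The `k × (k+1)` matrix `G_k` with ones on the diagonal. -/
def Gmat (k : ℕ) : Matrix (Fin k) (Fin (k + 1)) ℂ :=
  Matrix.of fun i j => if (j : ℕ) = (i : ℕ) then 1 else 0

/-- The Kronecker block `E_k(μ) = J_k(μ) - λ I_k`. -/
def Eblk (k : ℕ) (μ : ℂ) : Pencil k k := (Jmat k μ, 1)

/-- The Kronecker block `E_k(∞) = I_k - λ J_k(0)`. -/
def EInfblk (k : ℕ) : Pencil k k := (1, Jmat k 0)

/-- The Kronecker block `L_k = F_k - λ G_k`. -/
def Lblk (k : ℕ) : Pencil k (k + 1) := (Fmat k, Gmat k)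

/-- The Kronecker block `L_kᵀ = F_kᵀ - λ G_kᵀ`. -/
def LTblk (k : ℕ) : Pencil (k + 1) k := ((Fmat k)ᵀ, (Gmat k)ᵀ)

/-- The skew-symmetric matrix `[[0, X], [-Xᵀ, 0]]`. -/
def skewPair {p q : ℕ} (X : Matrix (Fin p) (Fin q) ℂ) :
    Matrix (Fin (p + q)) (Fin (p + q)) ℂ :=
  (fromBlocks 0 X (-Xᵀ) 0).submatrix finSumFinEquiv.symm finSumFinEquiv.symm

/-- The skew-symmetric canonical block `H_h(μ)` (size `2h × 2h`). -/
def Hblk (h : ℕ) (μ : ℂ) : Pencil (h + h) (h + h) :=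
  (skewPair (Jmat h μ), skewPair (1 : Matrix (Fin h) (Fin h) ℂ))

/-- The skew-symmetric canonical block `K_k = H_k(∞)` (size `2k × 2k`). -/
def Kblk (k : ℕ) : Pencil (k + k) (k + k) :=
  (skewPair (1 : Matrix (Fin k) (Fin k) ℂ), skewPair (Jmat k 0))

/-- The skew-symmetric canonical block `M_m` (size `(2m+1) × (2m+1)`). -/
def Mblk (m : ℕ) : Pencil (m + (m + 1)) (m + (m + 1)) :=
  (skewPair (Fmat m), skewPair (Gmat m))

/-!
Adding the zero summand `M_0` maps orbits of size `n` to orbits of size `n + 1` by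
`P ↦ P ⊕ 0`, and this map identifies the interval between `orbᶜ P2` and `orbᶜ P1` with the
interval between `orbᶜ (P2 ⊕ 0)` and `orbᶜ (P1 ⊕ 0)`.

* It reflects congruence: if `S = [[U, u], [w, c]]` carries `P ⊕ 0` to `Q ⊕ 0`, so does
  `S [[1, 0], [Y, 1]]`, since the shear fixes every pencil of the form `X ⊕ 0`; its leading
  block `U + u Y` carries `P` to `Q`, and it is invertible for `Y = 0` or `Y = w` because
  `det (U + u w) = (1 + c) det U - det S` (the determinant is linear in the last row).
* It preserves and reflects closure inclusions: the leading block of `Sᵀ (P ⊕ 0) S` is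
  `Uᵀ P U` for the leading block `U` of `S`, and invertible matrices are dense.
* Every pencil in the closure of `orbᶜ (P ⊕ 0)` has a common kernel vector of its two
  coefficients (a closed condition), and a skew-symmetric pencil with such a vector is
  congruent to some `P' ⊕ 0`.
-/

namespace Matrix

theorem dense_setOf_isUnit {𝕜 ι : Type*} [NontriviallyNormedField 𝕜] [CompleteSpace 𝕜]
    [Fintype ι] [DecidableEq ι] : Dense {A : Matrix ι ι 𝕜 | IsUnit A} := by
  intro A
  have hcont : Continuous fun t : 𝕜 => A + t • (1 : Matrix ι ι 𝕜) := by fun_prop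
  have hdense : Dense (spectrum 𝕜 (-A))ᶜ := (Matrix.finite_spectrum (-A)).countable.dense_compl 𝕜
  have hmaps : Set.MapsTo (fun t : 𝕜 => A + t • (1 : Matrix ι ι 𝕜)) (spectrum 𝕜 (-A))ᶜ
      {A : Matrix ι ι 𝕜 | IsUnit A} := by
    intro t ht
    simpa [spectrum.notMem_iff, Algebra.algebraMap_eq_smul_one, add_comm] using ht
  simpa using map_mem_closure hcont (hdense 0) hmaps

theorem exists_isUnit_mulVec_single_eq {K ι : Type*} [Field K] [Fintype ι] [DecidableEq ι]
    {v : ι → K} (hv : v ≠ 0) (j : ι) :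
    ∃ S : Matrix ι ι K, IsUnit S ∧ S *ᵥ Pi.single j 1 = v := by
  obtain ⟨i, hi⟩ := Function.ne_iff.1 hv
  refine ⟨((1 : Matrix ι ι K).updateCol i v).submatrix id (Equiv.swap i j), ?_, ?_⟩
  · rw [isUnit_iff_isUnit_det, det_permute', ← cramer_apply, cramer_one]
    exact ((Equiv.Perm.sign _).isUnit.map (Int.castRingHom K)).mul (isUnit_iff_ne_zero.2 hi)
  · ext k; simp

section Blocks

variable {R l m : Type*} [CommRing R]

theorem fromBlocks_eq_updateRow [DecidableEq l] (A : Matrix l l R) (B : Matrix l (Fin 1) R)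
    (C : Matrix (Fin 1) l R) (D : Matrix (Fin 1) (Fin 1) R) :
    fromBlocks A B C D = (fromBlocks A B 0 0).updateRow (Sum.inr 0) (Sum.elim (C 0) (D 0)) := by
  ext (i | i) (j | j) <;> simp [updateRow_apply, Fin.fin_one_eq_zero]

variable [Fintype l] [Fintype m]

theorem toBlocks₁₁_transpose_mul_fromBlocks_zero_mul (A : Matrix l l R)
    (M : Matrix (l ⊕ m) (l ⊕ m) R) :
    (Mᵀ * fromBlocks A 0 0 0 * M).toBlocks₁₁ = M.toBlocks₁₁ᵀ * A * M.toBlocks₁₁ := by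
  conv_lhs => rw [← fromBlocks_toBlocks M]
  simp [fromBlocks_transpose, fromBlocks_multiply, Matrix.mul_assoc]

theorem transpose_mul_fromBlocks_zero_mul_fromBlocks (A S : Matrix l l R) (Y : Matrix m l R)
    (D : Matrix m m R) :
    (fromBlocks S 0 Y D)ᵀ * fromBlocks A 0 0 0 * fromBlocks S 0 Y D =
      fromBlocks (Sᵀ * A * S) 0 0 0 := by
  simp [fromBlocks_transpose, fromBlocks_multiply]

variable [DecidableEq l]

theorem det_toBlocks₁₁_add_toBlocks₁₂_mul_toBlocks₂₁ (M : Matrix (l ⊕ Fin 1) (l ⊕ Fin 1) R) :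
    det (M.toBlocks₁₁ + M.toBlocks₁₂ * M.toBlocks₂₁) =
      (1 + M.toBlocks₂₂ 0 0) * det M.toBlocks₁₁ - det M := by
  set N := fromBlocks M.toBlocks₁₁ M.toBlocks₁₂ 0 0
  have hrows : Sum.elim ((-M.toBlocks₂₁) 0) ((1 : Matrix (Fin 1) (Fin 1) R) 0) +
      Sum.elim (M.toBlocks₂₁ 0) (M.toBlocks₂₂ 0) =
        (1 + M.toBlocks₂₂ 0 0) •
          Sum.elim ((0 : Matrix (Fin 1) l R) 0) ((1 : Matrix (Fin 1) (Fin 1) R) 0) := by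
    ext (i | i) <;> simp [Fin.fin_one_eq_zero]
  have hdet := congrArg (fun r => det (N.updateRow (Sum.inr 0) r)) hrows
  simp only [det_updateRow_add, det_updateRow_smul, N] at hdet
  rw [← fromBlocks_eq_updateRow, ← fromBlocks_eq_updateRow, ← fromBlocks_eq_updateRow,
    fromBlocks_toBlocks, det_fromBlocks_one₂₂, det_fromBlocks_zero₂₁, det_one, mul_one,
    Matrix.mul_neg, sub_neg_eq_add] at hdet
  linear_combination hdet

theorem exists_isUnit_toBlocks₁₁_add_toBlocks₁₂_mul {K : Type*} [Field K]
    {M : Matrix (l ⊕ Fin 1) (l ⊕ Fin 1) K} (hM : IsUnit M) :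
    ∃ Y : Matrix (Fin 1) l K, IsUnit (M.toBlocks₁₁ + M.toBlocks₁₂ * Y) := by
  by_cases hU : IsUnit M.toBlocks₁₁
  · exact ⟨0, by simpa using hU⟩
  refine ⟨M.toBlocks₂₁, ?_⟩
  rw [isUnit_iff_isUnit_det, isUnit_iff_ne_zero] at hM hU ⊢
  rw [det_toBlocks₁₁_add_toBlocks₁₂_mul_toBlocks₂₁, not_not.1 hU]
  simpa using hM

end Blocks

theorem submatrix_fromBlocks_zero_eq {R : Type*} [CommRing R] {n : ℕ}
    {A : Matrix (Fin (n + 1)) (Fin (n + 1)) R} (hA : Aᵀ = -A)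
    (hlast : A *ᵥ Pi.single (Fin.last n) 1 = 0) :
    (fromBlocks (A.submatrix Fin.castSucc Fin.castSucc) 0 0 (0 : Matrix (Fin 1) (Fin 1) R)).submatrix
      finSumFinEquiv.symm finSumFinEquiv.symm = A := by
  have hcol (i : Fin (n + 1)) : A i (Fin.last n) = 0 := by
    simpa [mulVec_single_one] using congrFun hlast i
  have hrow (j : Fin (n + 1)) : A (Fin.last n) j = 0 := by
    simpa [hcol] using congrFun₂ hA j (Fin.last n)
  ext i j
  induction i using Fin.lastCases <;> induction j using Fin.lastCases <;> simp [hcol, hrow]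

end Matrix

theorem Mblk_zero : Mblk 0 = 0 := by
  ext i j <;> fin_cases i <;> fin_cases j <;> rfl

namespace Pencil

variable {n : ℕ}

section Congruence

def congrBy (S : Matrix (Fin n) (Fin n) ℂ) (P : Pencil n n) : Pencil n n :=
  (Sᵀ * P.1 * S, Sᵀ * P.2 * S)

@[simp]
theorem congrBy_one (P : Pencil n n) : congrBy 1 P = P := by
  simp [congrBy]

theorem congrBy_mul (S T : Matrix (Fin n) (Fin n) ℂ) (P : Pencil n n) :
    congrBy (S * T) P = congrBy T (congrBy S P) := by
  simp only [congrBy, transpose_mul, Matrix.mul_assoc]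

theorem continuous_congrBy_left (P : Pencil n n) : Continuous fun S => congrBy S P := by
  unfold congrBy; fun_prop

theorem continuous_congrBy_right (S : Matrix (Fin n) (Fin n) ℂ) :
    Continuous (congrBy S) := by
  unfold congrBy; fun_prop

theorem congruent_iff {P Q : Pencil n n} :
    Congruent P Q ↔ ∃ S, IsUnit S ∧ congrBy S P = Q := by
  simp only [Congruent, congrBy, Prod.ext_iff]

theorem Congruent.refl (P : Pencil n n) : Congruent P P :=
  congruent_iff.2 ⟨1, isUnit_one, congrBy_one P⟩

theorem Congruent.trans {P Q R : Pencil n n} (hPQ : Congruent P Q) (hQR : Congruent Q R) :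
    Congruent P R := by
  obtain ⟨S, hS, rfl⟩ := congruent_iff.1 hPQ
  obtain ⟨T, hT, rfl⟩ := congruent_iff.1 hQR
  exact congruent_iff.2 ⟨S * T, hS.mul hT, congrBy_mul S T P⟩

theorem Congruent.symm {P Q : Pencil n n} (h : Congruent P Q) : Congruent Q P := by
  obtain ⟨S, hS, rfl⟩ := congruent_iff.1 h
  refine congruent_iff.2 ⟨S⁻¹, (isUnit_nonsing_inv_iff).2 hS, ?_⟩
  rw [← congrBy_mul, mul_nonsing_inv S ((isUnit_iff_isUnit_det S).1 hS), congrBy_one]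

theorem congruent_iff_orbC_eq {P Q : Pencil n n} : Congruent P Q ↔ orbC P = orbC Q := by
  refine ⟨fun h => Set.ext fun R => ⟨h.symm.trans, h.trans⟩, fun h => ?_⟩
  have hQ : Q ∈ orbC Q := Congruent.refl Q
  rw [← h] at hQ
  exact hQ

theorem orbC_eq_image (P : Pencil n n) : orbC P = (congrBy · P) '' {S | IsUnit S} := by
  ext Q
  exact congruent_iff

theorem closure_orbC (P : Pencil n n) :
    closure (orbC P) = closure (Set.range fun S => congrBy S P) := by
  rw [orbC_eq_image, ← closure_image_closure (continuous_congrBy_left P),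
    Matrix.dense_setOf_isUnit.closure_eq, Set.image_univ]

theorem orbC_subset_closure_orbC_iff {P Q : Pencil n n} :
    orbC Q ⊆ closure (orbC P) ↔ Q ∈ closure (orbC P) := by
  refine ⟨fun h => h (Congruent.refl Q), fun hQ R hR => ?_⟩
  obtain ⟨S, hS, rfl⟩ := congruent_iff.1 hR
  refine map_mem_closure (continuous_congrBy_right S) hQ fun X hX => ?_
  obtain ⟨T, hT, rfl⟩ := congruent_iff.1 hX
  exact congruent_iff.2 ⟨T * S, hT.mul hS, congrBy_mul T S P⟩

theorem coversC_congr {P1 P2 Q1 Q2 : Pencil n n} (h1 : Congruent P1 Q1) (h2 : Congruent P2 Q2) :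
    CoversC P1 P2 ↔ CoversC Q1 Q2 := by
  simp only [CoversC, congruent_iff_orbC_eq, congruent_iff_orbC_eq.1 h1,
    congruent_iff_orbC_eq.1 h2]

end Congruence

section DsumZero

def upperLeft (X : Pencil (n + 1) (n + 1)) : Pencil n n :=
  (X.1.submatrix Fin.castSucc Fin.castSucc, X.2.submatrix Fin.castSucc Fin.castSucc)

theorem continuous_upperLeft : Continuous (upperLeft (n := n)) := by
  unfold upperLeft; fun_prop

theorem continuous_dsum_zero : Continuous fun P : Pencil n n => dsum P (0 : Pencil 1 1) := by
  unfold dsum; fun_prop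

@[simp]
theorem upperLeft_dsum_zero (P : Pencil n n) : upperLeft (dsum P (0 : Pencil 1 1)) = P := by
  ext i j <;> simp [upperLeft, dsum]

theorem submatrix_castSucc_submatrix_finSumFinEquiv
    (M : Matrix (Fin n ⊕ Fin 1) (Fin n ⊕ Fin 1) ℂ) :
    (M.submatrix finSumFinEquiv.symm finSumFinEquiv.symm).submatrix Fin.castSucc Fin.castSucc =
      M.toBlocks₁₁ := by
  ext i j; simp [toBlocks₁₁]

theorem isUnit_submatrix_finSumFinEquiv {M : Matrix (Fin n ⊕ Fin 1) (Fin n ⊕ Fin 1) ℂ} :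
    IsUnit (M.submatrix finSumFinEquiv.symm finSumFinEquiv.symm) ↔ IsUnit M := by
  simp only [isUnit_iff_isUnit_det, det_submatrix_equiv_self]

theorem exists_submatrix_finSumFinEquiv_eq (S : Matrix (Fin (n + 1)) (Fin (n + 1)) ℂ) :
    ∃ M : Matrix (Fin n ⊕ Fin 1) (Fin n ⊕ Fin 1) ℂ,
      M.submatrix finSumFinEquiv.symm finSumFinEquiv.symm = S :=
  ⟨S.submatrix finSumFinEquiv finSumFinEquiv, by simp⟩

theorem congrBy_submatrix_dsum_zero (M : Matrix (Fin n ⊕ Fin 1) (Fin n ⊕ Fin 1) ℂ)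
    (P : Pencil n n) :
    congrBy (M.submatrix finSumFinEquiv.symm finSumFinEquiv.symm) (dsum P (0 : Pencil 1 1)) =
      ((Mᵀ * fromBlocks P.1 0 0 0 * M).submatrix finSumFinEquiv.symm finSumFinEquiv.symm,
       (Mᵀ * fromBlocks P.2 0 0 0 * M).submatrix finSumFinEquiv.symm finSumFinEquiv.symm) := by
  simp only [congrBy, dsum, transpose_submatrix, submatrix_mul_equiv]
  rfl

theorem congrBy_fromBlocks_dsum_zero (S : Matrix (Fin n) (Fin n) ℂ)
    (Y : Matrix (Fin 1) (Fin n) ℂ) (D : Matrix (Fin 1) (Fin 1) ℂ) (P : Pencil n n) :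
    congrBy ((fromBlocks S 0 Y D).submatrix finSumFinEquiv.symm finSumFinEquiv.symm)
      (dsum P (0 : Pencil 1 1)) = dsum (congrBy S P) (0 : Pencil 1 1) := by
  rw [congrBy_submatrix_dsum_zero, transpose_mul_fromBlocks_zero_mul_fromBlocks,
    transpose_mul_fromBlocks_zero_mul_fromBlocks]
  rfl

theorem upperLeft_congrBy_dsum_zero (S : Matrix (Fin (n + 1)) (Fin (n + 1)) ℂ)
    (P : Pencil n n) :
    upperLeft (congrBy S (dsum P (0 : Pencil 1 1))) =
      congrBy (S.submatrix Fin.castSucc Fin.castSucc) P := by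
  obtain ⟨M, rfl⟩ := exists_submatrix_finSumFinEquiv_eq S
  simp only [congrBy_submatrix_dsum_zero, upperLeft, submatrix_castSucc_submatrix_finSumFinEquiv,
    toBlocks₁₁_transpose_mul_fromBlocks_zero_mul]
  rfl

theorem Congruent.dsum_zero {P Q : Pencil n n} (h : Congruent P Q) :
    Congruent (dsum P (0 : Pencil 1 1)) (dsum Q (0 : Pencil 1 1)) := by
  obtain ⟨S, hS, rfl⟩ := congruent_iff.1 h
  refine congruent_iff.2 ⟨_, ?_, congrBy_fromBlocks_dsum_zero S 0 1 P⟩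
  rw [isUnit_submatrix_finSumFinEquiv, isUnit_iff_isUnit_det, det_fromBlocks_zero₁₂, det_one,
    mul_one]
  exact (isUnit_iff_isUnit_det S).1 hS

theorem Congruent.of_dsum_zero {P Q : Pencil n n}
    (h : Congruent (dsum P (0 : Pencil 1 1)) (dsum Q (0 : Pencil 1 1))) : Congruent P Q := by
  obtain ⟨S, hS, hPQ⟩ := congruent_iff.1 h
  obtain ⟨M, rfl⟩ := exists_submatrix_finSumFinEquiv_eq S
  obtain ⟨Y, hY⟩ :=
    exists_isUnit_toBlocks₁₁_add_toBlocks₁₂_mul (isUnit_submatrix_finSumFinEquiv.1 hS)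
  set T := (fromBlocks 1 0 Y 1 : Matrix (Fin n ⊕ Fin 1) (Fin n ⊕ Fin 1) ℂ).submatrix
    finSumFinEquiv.symm finSumFinEquiv.symm
  have hblock : (M.submatrix finSumFinEquiv.symm finSumFinEquiv.symm * T).submatrix
      Fin.castSucc Fin.castSucc = M.toBlocks₁₁ + M.toBlocks₁₂ * Y := by
    rw [submatrix_mul_equiv, submatrix_castSucc_submatrix_finSumFinEquiv]
    conv_lhs => rw [← fromBlocks_toBlocks M, fromBlocks_multiply]
    simp
  refine congruent_iff.2 ⟨_, hblock ▸ hY, ?_⟩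
  rw [← upperLeft_congrBy_dsum_zero, congrBy_mul, hPQ, congrBy_fromBlocks_dsum_zero, congrBy_one,
    upperLeft_dsum_zero]

theorem congruent_dsum_zero_iff {P Q : Pencil n n} :
    Congruent (dsum P (0 : Pencil 1 1)) (dsum Q (0 : Pencil 1 1)) ↔ Congruent P Q :=
  ⟨Congruent.of_dsum_zero, Congruent.dsum_zero⟩

theorem dsum_zero_mem_closure_orbC_iff {P Q : Pencil n n} :
    dsum Q (0 : Pencil 1 1) ∈ closure (orbC (dsum P (0 : Pencil 1 1))) ↔
      Q ∈ closure (orbC P) := by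
  constructor
  · intro h
    rw [closure_orbC]
    simpa using map_mem_closure continuous_upperLeft h fun X hX => by
      obtain ⟨S, -, rfl⟩ := congruent_iff.1 hX
      exact ⟨_, (upperLeft_congrBy_dsum_zero S P).symm⟩
  · exact fun h => map_mem_closure (f := fun X => dsum X (0 : Pencil 1 1)) continuous_dsum_zero h
      fun X hX => Congruent.dsum_zero hX

end DsumZero

section Skew

theorem isSkew_zero : IsSkew (0 : Pencil n n) := by
  simp [IsSkew]

theorem IsSkew.congrBy {P : Pencil n n} (hP : IsSkew P) (S : Matrix (Fin n) (Fin n) ℂ) :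
    IsSkew (congrBy S P) := by
  simp only [IsSkew, Pencil.congrBy, transpose_mul, transpose_transpose, hP.1, hP.2,
    Matrix.mul_neg, Matrix.neg_mul, Matrix.mul_assoc, and_self]

theorem IsSkew.dsum {k : ℕ} {P : Pencil n n} {Q : Pencil k k} (hP : IsSkew P) (hQ : IsSkew Q) :
    IsSkew (Pencil.dsum P Q) := by
  simp only [IsSkew, Pencil.dsum, transpose_submatrix, fromBlocks_transpose, transpose_zero, hP.1,
    hP.2, hQ.1, hQ.2]
  constructor <;> ext i j <;> obtain ⟨i | i, rfl⟩ := finSumFinEquiv.surjective i <;>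
    obtain ⟨j | j, rfl⟩ := finSumFinEquiv.surjective j <;> simp

theorem IsSkew.upperLeft {X : Pencil (n + 1) (n + 1)} (hX : IsSkew X) :
    IsSkew (upperLeft X) := by
  simp only [IsSkew, Pencil.upperLeft, transpose_submatrix, hX.1, hX.2]
  exact ⟨rfl, rfl⟩

theorem dsum_upperLeft_of_mulVec_single_last {X : Pencil (n + 1) (n + 1)} (hX : IsSkew X)
    (h1 : X.1 *ᵥ Pi.single (Fin.last n) 1 = 0) (h2 : X.2 *ᵥ Pi.single (Fin.last n) 1 = 0) :
    dsum (upperLeft X) (0 : Pencil 1 1) = X :=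
  Prod.ext (submatrix_fromBlocks_zero_eq hX.1 h1) (submatrix_fromBlocks_zero_eq hX.2 h2)

end Skew

section CommonKernel

def HasCommonKernelVector {p q : ℕ} (X : Pencil p q) : Prop :=
  ∃ v : Fin q → ℂ, v ≠ 0 ∧ X.1 *ᵥ v = 0 ∧ X.2 *ᵥ v = 0

open scoped ComplexOrder in
theorem hasCommonKernelVector_iff_det {p q : ℕ} (X : Pencil p q) :
    HasCommonKernelVector X ↔ det (X.1ᴴ * X.1 + X.2ᴴ * X.2) = 0 := by
  rw [← fromCols_mul_fromRows, ← conjTranspose_fromRows_eq_fromCols_conjTranspose,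
    ← exists_mulVec_eq_zero_iff]
  simp only [HasCommonKernelVector, conjTranspose_mul_self_mulVec_eq_zero, fromRows_mulVec,
    ← Sum.elim_zero_zero, Sum.elim_eq_iff]

theorem isClosed_setOf_hasCommonKernelVector {p q : ℕ} :
    IsClosed {X : Pencil p q | HasCommonKernelVector X} := by
  simp only [hasCommonKernelVector_iff_det]
  exact isClosed_eq (by fun_prop) continuous_const

theorem HasCommonKernelVector.congrBy {X : Pencil n n} (hX : HasCommonKernelVector X)
    {S : Matrix (Fin n) (Fin n) ℂ} (hS : IsUnit S) : HasCommonKernelVector (congrBy S X) := by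
  obtain ⟨v, hv, h1, h2⟩ := hX
  have hSS : S * S⁻¹ = 1 := mul_nonsing_inv S ((isUnit_iff_isUnit_det S).1 hS)
  refine ⟨S⁻¹ *ᵥ v, fun h => hv ?_, ?_, ?_⟩
  · rw [← one_mulVec v, ← hSS, ← mulVec_mulVec, h, mulVec_zero]
  all_goals rw [Pencil.congrBy, ← mulVec_mulVec, mulVec_mulVec _ S, hSS, one_mulVec,
    ← mulVec_mulVec]
  · rw [h1, mulVec_zero]
  · rw [h2, mulVec_zero]

theorem hasCommonKernelVector_dsum_zero (P : Pencil n n) :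
    HasCommonKernelVector (dsum P (0 : Pencil 1 1)) := by
  refine ⟨Pi.single (Fin.last n) 1, by simp, ?_, ?_⟩ <;> ext i <;>
    obtain ⟨i | i, rfl⟩ := finSumFinEquiv.surjective i <;> simp [dsum]

theorem closure_orbC_dsum_zero_subset (P : Pencil n n) :
    closure (orbC (dsum P (0 : Pencil 1 1))) ⊆ {X | HasCommonKernelVector X} := by
  refine closure_minimal (fun X hX => ?_) isClosed_setOf_hasCommonKernelVector
  obtain ⟨S, hS, rfl⟩ := congruent_iff.1 hX
  exact (hasCommonKernelVector_dsum_zero P).congrBy hS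

theorem exists_dsum_zero_congruent_of_hasCommonKernelVector {R : Pencil (n + 1) (n + 1)}
    (hR : IsSkew R) (hker : HasCommonKernelVector R) :
    ∃ R' : Pencil n n, IsSkew R' ∧ Congruent (dsum R' (0 : Pencil 1 1)) R := by
  obtain ⟨v, hv, h1, h2⟩ := hker
  obtain ⟨S, hS, hSv⟩ := exists_isUnit_mulVec_single_eq hv (Fin.last n)
  refine ⟨upperLeft (congrBy S R), (hR.congrBy S).upperLeft, ?_⟩
  rw [dsum_upperLeft_of_mulVec_single_last (hR.congrBy S)]
  · exact (congruent_iff.2 ⟨S, hS, rfl⟩).symm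
  all_goals simp only [Pencil.congrBy, ← mulVec_mulVec, hSv, h1, h2, mulVec_zero]

end CommonKernel

theorem coversC_dsum_zero_iff {P1 P2 : Pencil n n} :
    CoversC (dsum P1 (0 : Pencil 1 1)) (dsum P2 (0 : Pencil 1 1)) ↔ CoversC P1 P2 := by
  simp only [CoversC, congruent_dsum_zero_iff, orbC_subset_closure_orbC_iff,
    dsum_zero_mem_closure_orbC_iff]
  refine and_congr_right' (and_congr_right' (not_congr ⟨?_, ?_⟩))
  · rintro ⟨R, hR, hR1, hR2, hRP1, hP2R⟩
    obtain ⟨R', hR', hR'R⟩ := exists_dsum_zero_congruent_of_hasCommonKernelVector hR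
      (closure_orbC_dsum_zero_subset P1 hRP1)
    refine ⟨R', hR', fun h => hR1 (hR'R.symm.trans h.dsum_zero),
      fun h => hR2 (hR'R.symm.trans h.dsum_zero), ?_, ?_⟩
    · exact dsum_zero_mem_closure_orbC_iff.1 (orbC_subset_closure_orbC_iff.2 hRP1 hR'R.symm)
    · rwa [← dsum_zero_mem_closure_orbC_iff, congruent_iff_orbC_eq.1 hR'R]
  · rintro ⟨R, hR, hR1, hR2, hRP1, hP2R⟩
    exact ⟨dsum R 0, hR.dsum isSkew_zero, mt Congruent.of_dsum_zero hR1,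
      mt Congruent.of_dsum_zero hR2, dsum_zero_mem_closure_orbC_iff.2 hRP1,
      dsum_zero_mem_closure_orbC_iff.2 hP2R⟩

end Pencil

theorem coversC_dsum_M0_general {n : ℕ} (P1 P2 : Pencil n n)
    (Q1 Q2 : Pencil (n + 1) (n + 1))
    (hQ1 : Pencil.Congruent (Pencil.dsum P1 (Mblk 0)) Q1)
    (hQ2 : Pencil.Congruent (Pencil.dsum P2 (Mblk 0)) Q2) :
    Pencil.CoversC P1 P2 ↔ Pencil.CoversC Q1 Q2 := by
  rw [Mblk_zero] at hQ1 hQ2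
  exact Pencil.coversC_dsum_zero_iff.symm.trans (Pencil.coversC_congr hQ1 hQ2)

/-- **Theorem 4.1**: let `Q1`, `Q2` be the `(n+1) × (n+1)` skew-symmetric
pencils congruent to `P1 ⊕ M_0` and `P2 ⊕ M_0` respectively. Then `orbᶜ P1`
covers `orbᶜ P2` if and only if `orbᶜ Q1` covers `orbᶜ Q2`. -/
theorem coversC_dsum_M0 {n : ℕ} (P1 P2 : Pencil n n)
    (h1 : Pencil.IsSkew P1) (h2 : Pencil.IsSkew P2)
    (Q1 Q2 : Pencil (n + 1) (n + 1))
    (hQ1 : Pencil.Congruent (Pencil.dsum P1 (Mblk 0)) Q1)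
    (hQ2 : Pencil.Congruent (Pencil.dsum P2 (Mblk 0)) Q2) :
    Pencil.CoversC P1 P2 ↔ Pencil.CoversC Q1 Q2 :=
  coversC_dsum_M0_general P1 P2 Q1 Q2 hQ1 hQ2
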